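/- For every k > 0, let G_k = ({X_0, …, X_k}, {a}, Δ_k) with Δ_k = { X_i → X_{i−1} X_{i−1} | 1 ≤ i ≤ k } ∪ { X_0 → a }. Then: (1) L_{X_k}(G_k) = { a^{2^k} }; (2) there is exactly one control word γ ∈ Δ_k* such that X_k ⇒^γ a^{2^k} is a depth-first derivation of G_k, and this γ has length |γ| ≥ 2^k; (3) every depth-first derivation of a^{2^k} from X_k in G_k is of index exactly k+1 (it is (k+1)-index but not k-index). -/

import Mathlib

namespace Paper

/-- A word over nonterminals `N` and terminals `T`. -/
abbrev Word (N T : Type) := List (N ⊕ T)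

/-- A production of a grammar. -/
abbrev CProd (N T : Type) := N × Word N T

/-- A grammar, given by its set of productions. -/
structure CFG (N T : Type) where
  prods : Set (CProd N T)

variable {N T : Type}

/-- number of occurrences of nonterminals in a word -/
def ntCount (u : Word N T) : ℕ := (u.filter (fun s => s.isLeft)).length

/-- number of occurrences of terminals in a word -/
def tCount (u : Word N T) : ℕ := (u.filter (fun s => s.isRight)).length

/-- the result of applying production `p` at position `j` of `u` -/
def applyProd (p : CProd N T) (j : ℕ) (u : Word N T) : Word N T :=
  u.take j ++ p.2 ++ u.drop (j + 1)

/-- `KSeq G k u γjs v`: a step sequence from `u` to `v` applying the indicated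
productions at the indicated positions, in which every word (including `u`, `v`)
has at most `k` occurrences of nonterminals (`k = ⊤` places no restriction). -/
inductive KSeq (G : CFG N T) (k : ℕ∞) : Word N T → List (CProd N T × ℕ) → Word N T → Prop
  | refl (u : Word N T) : (ntCount u : ℕ∞) ≤ k → KSeq G k u [] u
  | step {u v : Word N T} {p : CProd N T} {j : ℕ} {rest : List (CProd N T × ℕ)} :
      (ntCount u : ℕ∞) ≤ k → p ∈ G.prods → u[j]? = some (Sum.inl p.1) →
      KSeq G k (applyProd p j u) rest v → KSeq G k u ((p, j) :: rest) v

/-- words annotated with the index of the step at which each symbol occurrence appeared -/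
abbrev AWord (N T : Type) := List ((N ⊕ T) × ℕ)

def strip (u : AWord N T) : Word N T := u.map Prod.fst

def ntCountA (u : AWord N T) : ℕ := (u.filter (fun s => s.1.isLeft)).length

def applyProdA (p : CProd N T) (j m : ℕ) (u : AWord N T) : AWord N T :=
  u.take j ++ p.2.map (fun s => (s, m)) ++ u.drop (j + 1)

/-- the depth-first condition: position `j` carries a maximal first-appearance
index among the nonterminal occurrences of `u` -/
def dfOK (u : AWord N T) (j : ℕ) : Prop :=
  ∀ i x o, u[(i : ℕ)]? = some (Sum.inl x, o) → ∀ s oj, u[j]? = some (s, oj) → o ≤ oj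

/-- `DFSeq G k m u γjs v`: a `k`-index depth-first step sequence on annotated words,
where `m` is the index (in the whole sequence) of the current word `u`. -/
inductive DFSeq (G : CFG N T) (k : ℕ∞) : ℕ → AWord N T → List (CProd N T × ℕ) → AWord N T → Prop
  | refl (m : ℕ) (u : AWord N T) : (ntCountA u : ℕ∞) ≤ k → DFSeq G k m u [] u
  | step {m : ℕ} {u v : AWord N T} {p : CProd N T} {j o : ℕ} {rest : List (CProd N T × ℕ)} :
      (ntCountA u : ℕ∞) ≤ k → p ∈ G.prods → u[j]? = some (Sum.inl p.1, o) →
      dfOK u j →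
      DFSeq G k (m + 1) (applyProdA p j (m + 1) u) rest v →
      DFSeq G k m u ((p, j) :: rest) v

/-- `u ⇒^γ v` by a `k`-index step sequence (positions existentially quantified). -/
def CtrlSeq (G : CFG N T) (k : ℕ∞) (u : Word N T) (γ : List (CProd N T)) (v : Word N T) : Prop :=
  ∃ js : List ℕ, js.length = γ.length ∧ KSeq G k u (γ.zip js) v

/-- annotate a word as an initial word of a step sequence -/
def annot (u : Word N T) : AWord N T := u.map (fun s => (s, 0))

/-- `u ⇒^γ v` by a `k`-index depth-first step sequence starting at `u`. -/
def DFCtrlFrom (G : CFG N T) (k : ℕ∞) (u : Word N T) (γ : List (CProd N T)) (v : Word N T) :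
    Prop :=
  ∃ (js : List ℕ) (va : AWord N T),
    js.length = γ.length ∧ DFSeq G k 0 (annot u) (γ.zip js) va ∧ strip va = v

/-- embedding of terminal words -/
def tw (w : List T) : Word N T := w.map Sum.inr

/-- the sentential word `u Y v` where `u, v` are terminal and `Y` is an optional nonterminal -/
def sent (u : List T) (Y : Option N) (v : List T) : Word N T :=
  tw u ++ (Y.elim [] (fun y => [Sum.inl y])) ++ tw v

/-- `L^{(k)}_{X,Y}(G) = { u·v | X ⇒* u Y v by a k-index step sequence }`;
`Y = none` stands for `ε`. -/
def LKY (G : CFG N T) (k : ℕ∞) (X : N) (Y : Option N) : Set (List T) :=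
  {w | ∃ u v γ, w = u ++ v ∧ CtrlSeq G k [Sum.inl X] γ (sent u Y v)}

/-- `L_X(G)` -/
def Lang (G : CFG N T) (X : N) : Set (List T) := LKY G ⊤ X none

/-- `L^{(k)}_X(G)` -/
def LangK (G : CFG N T) (k : ℕ) (X : N) : Set (List T) := LKY G (k : ℕ∞) X none

/-- `Γ^{df(k)}_{X,Y}(G)`: control words of `k`-index depth-first step sequences `X ⇒^γ u Y v`. -/
def GammaDF (G : CFG N T) (k : ℕ) (X : N) (Y : Option N) : Set (List (CProd N T)) :=
  {γ | ∃ u v : List T, DFCtrlFrom G (k : ℕ∞) [Sum.inl X] γ (sent u Y v)}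

/-- `L̂_{X,Y}(Γ, G)` -/
def LHat (G : CFG N T) (Γ : Set (List (CProd N T))) (X : N) (Y : Option N) : Set (List T) :=
  {w | ∃ u v, w = u ++ v ∧ ∃ γ ∈ Γ, CtrlSeq G ⊤ [Sum.inl X] γ (sent u Y v)}

/-- the language of the bounded expression `w₁* ⋯ w_d*` -/
def BLang {α : Type} : List (List α) → Set (List α)
  | [] => {[]}
  | w :: ws => {u | ∃ (n : ℕ) (v : List α), v ∈ BLang ws ∧ u = (List.replicate n w).flatten ++ v}

/-- the words of a bounded expression must be nonempty -/
def IsBExpr {α : Type} (ws : List (List α)) : Prop := ∀ w ∈ ws, w ≠ []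

/-- the language of the letter-bounded expression `a₁* ⋯ a_d*` -/
def letterLang {α : Type} (as : List α) : Set (List α) := BLang (as.map (fun a => [a]))

/-- the language `a_i* ⋯ a_j*` (0-indexed segment of `as` from `i` to `j` inclusive) -/
def segLang {α : Type} (as : List α) (i j : ℕ) : Set (List α) :=
  letterLang ((as.drop i).take (j - i + 1))

end Paper

namespace Paper

variable {N T : Type}

/-- ranked words over the nonterminals -/
abbrev RW (N : Type) := List (N × ℕ)

/-- the set of rank values is downward closed (equivalently, of the form `{0, …, m}`
when nonempty) -/
def contiguousRanks (q : RW N) : Prop := ∀ p ∈ q, ∀ j ≤ p.2, ∃ x : N, (x, j) ∈ q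

/-- vertices of the graph `A^{df(k)}_G` -/
def IsVertex (k : ℕ) (q : RW N) : Prop :=
  q.length ≤ k ∧ contiguousRanks q ∧ List.Pairwise (· ≤ ·) (q.map Prod.snd)

/-- `w↓Ξ` : projection of a word to its nonterminals -/
def ntProj (w : Word N T) : List N := w.filterMap Sum.getLeft?

open Classical in
/-- the rank given to the nonterminals produced by a step rewriting a nonterminal
of maximal rank `i`, where `uv` is the rest of the ranked word -/
noncomputable def newRank (uv : RW N) (i : ℕ) : ℕ :=
  if uv = [] then 0 else if ∀ p ∈ uv, p.2 ≠ i then i else i + 1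

/-- the edge relation of the graph `A^{df(k)}_G` -/
def Edge (G : CFG N T) (k : ℕ) (q : RW N) (p : CProd N T) (q' : RW N) : Prop :=
  p ∈ G.prods ∧ IsVertex k q ∧ IsVertex k q' ∧
  ∃ (u v : RW N) (i : ℕ), q = u ++ [(p.1, i)] ++ v ∧ (∀ x ∈ q, x.2 ≤ i) ∧
    q' = u ++ v ++ (ntProj p.2).map (fun X => (X, newRank (u ++ v) i))

/-- paths in a labeled graph, recording the sequence of edge labels -/
inductive GPath {V E : Type} (edge : V → E → V → Prop) : V → List E → V → Prop
  | refl (v : V) : GPath edge v [] v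
  | step {v v' v'' : V} {e : E} {es : List E} :
      edge v e v' → GPath edge v' es v'' → GPath edge v (e :: es) v''

/-- paths recording the successive vertices as well -/
inductive VPath {V E : Type} (edge : V → E → V → Prop) : V → List (E × V) → Prop
  | refl (v : V) : VPath edge v []
  | step {v v' : V} {e : E} {rest : List (E × V)} :
      edge v e v' → VPath edge v' rest → VPath edge v ((e, v') :: rest)

/-- endpoint of a path starting at `q` -/
def pend {V E : Type} (q : V) (π : List (E × V)) : V := (π.map Prod.snd).getLastD q

/-- a path is acyclic iff it visits no vertex twice -/
def AcyclicFrom {V E : Type} (q : V) (π : List (E × V)) : Prop :=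
  (q :: π.map Prod.snd).Nodup

/-- `Decomp edge q pairs fin` asserts that the path obtained by concatenating, in order,
the segments of `pairs` (each an acyclic segment followed by a cycle) and `fin` is a valid
path from `q`, alternating acyclic segments `ς_j` and cycles `θ_j`. -/
def Decomp {V E : Type} (edge : V → E → V → Prop) :
    V → List (List (E × V) × List (E × V)) → List (E × V) → Prop
  | q, [], fin => VPath edge q fin ∧ AcyclicFrom q fin
  | q, (σ, θ) :: rest, fin =>
      VPath edge q σ ∧ AcyclicFrom q σ ∧
      VPath edge (pend q σ) θ ∧ pend (pend q σ) θ = pend q σ ∧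
      Decomp edge (pend q σ) rest fin

/-- `|γ|_a`: total number of occurrences of the terminal `a` in the right-hand
sides of the productions of the control word `γ` -/
def projCnt {A : Type} [DecidableEq A] (γ : List (CProd N A)) (a : A) : ℕ :=
  ((γ.map (fun p => p.2)).flatten.filterMap Sum.getRight?).count a

/-- `proj(γ) = a₁^{|γ|_{a₁}} ⋯ a_s^{|γ|_{a_s}}` -/
def projW {A : Type} [DecidableEq A] (as : List A) (γ : List (CProd N A)) : List A :=
  (as.map (fun a => List.replicate (projCnt γ a) a)).flatten

end Paper

namespace Paper

variable {N T : Type}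

/-- a grammar is in 2-normal form -/
def TwoNF (G : CFG N T) : Prop := ∀ p ∈ G.prods, p.2.length ≤ 2

/-- states of the automaton/grammar `G^b`: `(s, i)` encodes `q^{(s+1)}_{i+1}`,
i.e. position `i` (0-indexed) inside the block `s` (0-indexed) -/
abbrev QB : Type := ℕ × ℕ

/-- `ℓ_s`: length of the `s`-th word of the bounded expression -/
def lenB (ws : List (List T)) (s : ℕ) : ℕ := (ws.getD s []).length

/-- the `i`-th letter of the `s`-th word -/
def letterB (ws : List (List T)) (s i : ℕ) : Option T := (ws.getD s [])[i]?

/-- the productions of the grammar `G^b` generating the bounded expression `b` -/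
def DeltaB (ws : List (List T)) : Set (CProd QB T) :=
  {p | (∃ s i a, s < ws.length ∧ i + 1 < lenB ws s ∧ letterB ws s i = some a ∧
          p = ((s, i), [Sum.inr a, Sum.inl (s, i + 1)]))
     ∨ (∃ s s' a, s ≤ s' ∧ s' < ws.length ∧
          letterB ws s (lenB ws s - 1) = some a ∧
          p = ((s, lenB ws s - 1), [Sum.inr a, Sum.inl (s', 0)]))
     ∨ (∃ s, s < ws.length ∧ p = ((s, 0), ([] : Word QB T)))}

/-- the grammar `G^b` -/
def GB (ws : List (List T)) : CFG QB T := ⟨DeltaB ws⟩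

/-- nonterminals `[q X q']` of the product grammar `G^∩` -/
abbrev NI (N : Type) : Type := QB × N × QB

/-- `q ∈ Ξ^b` -/
def ValidQ (ws : List (List T)) (q : QB) : Prop :=
  q.1 < ws.length ∧ q.2 < lenB ws q.1

/-- `[q X q'] ∈ Ξ^∩`: both states valid and blocks in order -/
def ValidNI (ws : List (List T)) (n : NI N) : Prop :=
  ValidQ ws n.1 ∧ ValidQ ws n.2.2 ∧ n.1.1 ≤ n.2.2.1

/-- `q ⇒* w·q'` in `G^b` -/
def DerB (ws : List (List T)) (q : QB) (w : List T) (q' : QB) : Prop :=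
  ∃ γ, CtrlSeq (GB ws) ⊤ [Sum.inl q] γ (tw w ++ [Sum.inl q'])

/-- the productions `Δ^∩` of the product grammar `G^∩` -/
def DeltaI (G : CFG N T) (ws : List (List T)) : Set (CProd (NI N) T) :=
  {pp | ∃ (q q' : QB) (X : N), ValidNI ws (q, X, q') ∧
     ((∃ w : List T, (X, tw w) ∈ G.prods ∧ DerB ws q w q' ∧
         pp = ((q, X, q'), tw w)) ∨
      (∃ Y : N, (X, [Sum.inl Y]) ∈ G.prods ∧
         pp = ((q, X, q'), [Sum.inl ((q, Y, q') : NI N)])) ∨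
      (∃ (a : T) (Y : N) (qm : QB), (X, [Sum.inr a, Sum.inl Y]) ∈ G.prods ∧
         ((q, [Sum.inr a, Sum.inl qm]) : CProd QB T) ∈ DeltaB ws ∧ ValidNI ws (qm, Y, q') ∧
         pp = ((q, X, q'), [Sum.inr a, Sum.inl ((qm, Y, q') : NI N)])) ∨
      (∃ (a : T) (Y : N) (qm : QB), (X, [Sum.inl Y, Sum.inr a]) ∈ G.prods ∧
         ((qm, [Sum.inr a, Sum.inl q']) : CProd QB T) ∈ DeltaB ws ∧ ValidNI ws (q, Y, qm) ∧
         pp = ((q, X, q'), [Sum.inl ((q, Y, qm) : NI N), Sum.inr a])) ∨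
      (∃ (Y Z : N) (qm : QB), (X, [Sum.inl Y, Sum.inl Z]) ∈ G.prods ∧
         ValidNI ws (q, Y, qm) ∧ ValidNI ws (qm, Z, q') ∧
         pp = ((q, X, q'), [Sum.inl ((q, Y, qm) : NI N), Sum.inl ((qm, Z, q') : NI N)])))}

/-- the product grammar `G^∩` -/
def GI (G : CFG N T) (ws : List (List T)) : CFG (NI N) T := ⟨DeltaI G ws⟩

/-- `ζ` on symbols -/
def zetaS : (NI N ⊕ T) → (N ⊕ T) := Sum.map (fun n => n.2.1) id

/-- `ζ` on productions -/
def zetaP (p : CProd (NI N) T) : CProd N T := (p.1.2.1, p.2.map zetaS)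

/-- `ζ` on control words -/
def zetaC (γ : List (CProd (NI N) T)) : List (CProd N T) := γ.map zetaP

/-- the intermediate state of the (unique, shortest) two-step run of `G^b` from the
left state of `h` to its right state; when the first step wraps, the least possible
intermediate block is chosen -/
noncomputable def iotaMid (ws : List (List T)) (h : NI N) (a b : T) : QB :=
  if h.1.2 + 1 < lenB ws h.1.1 then (h.1.1, h.1.2 + 1)
  else (sInf {y : ℕ | (((h.1.1, h.1.2), [Sum.inr a, Sum.inl ((y, 0) : QB)]) : CProd QB T) ∈ DeltaB ws ∧
                (((y, 0), [Sum.inr b, Sum.inl (h.2.2 : QB)]) : CProd QB T) ∈ DeltaB ws}, 0)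

/-- `ι` on right-hand sides: relabels terminals by the indices (0-indexed) of the
blocks of `b` completed by the corresponding moves of `G^b`; `h` is the head of the
production -/
noncomputable def iotaRhs (ws : List (List T)) (h : NI N) :
    Word (NI N) T → Word (NI N) ℕ
  | [] => []
  | [Sum.inr _] => if h.2.2.2 = 0 then [Sum.inr h.1.1] else []
  | [Sum.inr a, Sum.inr b] =>
      (if (iotaMid ws h a b).2 = 0 then [Sum.inr h.1.1] else []) ++
      (if h.2.2.2 = 0 then [Sum.inr (iotaMid ws h a b).1] else [])
  | [Sum.inr _, Sum.inl m] => (if m.1.2 = 0 then [Sum.inr h.1.1] else []) ++ [Sum.inl m]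
  | [Sum.inl m, Sum.inr _] => [Sum.inl m] ++ (if h.2.2.2 = 0 then [Sum.inr m.2.2.1] else [])
  | other => other.map (Sum.map id (fun _ => 0))

/-- the map `ι : Δ^∩ → Δ^⋈` -/
noncomputable def iota (ws : List (List T)) (p : CProd (NI N) T) : CProd (NI N) ℕ :=
  (p.1, iotaRhs ws p.1 p.2)

/-- the grammar `G^⋈`, whose terminals are the (0-indexed) letters `a₁, …, a_d`
represented by natural numbers -/
noncomputable def GBow (G : CFG N T) (ws : List (List T)) : CFG (NI N) ℕ :=
  ⟨iota ws '' DeltaI G ws⟩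

end Paper

namespace Paper

variable {N A : Type}

/-- `Ξ̂`: nonterminals producing some word starting with `a₁` and some word ending
with `a_d` -/
def XiHat (G : CFG N A) (a1 ad : A) : Set N :=
  {Y | (∃ w ∈ Lang G Y, ∃ v, w = a1 :: v) ∧ (∃ w ∈ Lang G Y, ∃ v, w = v ++ [ad])}

/-- the grammar `G^♯` (here `S = Ξ̂`, and `Ξ̌` is its complement) -/
def GSharp (G : CFG N A) (S : Set N) : CFG N A :=
  ⟨{p | p ∈ G.prods ∧ p.1 ∉ S} ∪
   {p | p ∈ G.prods ∧ p.1 ∈ S ∧ ∃ (u : Word N A) (Xr : N) (v : Word N A),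
      Xr ∈ S ∧ p.2 = u ++ [Sum.inl Xr] ++ v}⟩

/-- the grammar `G_{i,w}` for a pivot production `piv` (here `S = Ξ̂`) -/
def GPivot (G : CFG N A) (S : Set N) (piv : CProd N A) : CFG N A :=
  ⟨{p | p ∈ G.prods ∧ p.1 ∉ S} ∪ {piv}⟩

/-- `G` is reduced for `X` -/
def Reduced (G : CFG N A) (X : N) : Prop :=
  ∀ Y : N, Y ≠ X → (LKY G ⊤ X (some Y)).Nonempty ∧ (Lang G Y).Nonempty

/-- `a₁* ⋯ a_d*` (given by the list `as`) is the minimal strict letter-bounded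
expression for `L_X(G)` -/
def MinimalLB (G : CFG N A) (X : N) (as : List A) : Prop :=
  Lang G X ⊆ letterLang as ∧ ∀ i < as.length, ¬ (Lang G X ⊆ letterLang (as.eraseIdx i))

/-- a symbol of `A ∪ {ε}` as a word -/
def optT (a : Option A) : Word N A := a.elim [] (fun x => [Sum.inr x])

/-- a symbol of `Ξ ∪ {ε}` as a word -/
def optN (y : Option N) : Word N A := y.elim [] (fun x => [Sum.inl x])

/-- `y ⇒^γ u_y` is a (possibly empty) `k`-index depth-first derivation, where
`y ∈ Ξ ∪ {ε}`; for `y = ε` the derivation is empty -/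
def optDFDer (H : CFG N A) (k : ℕ) (y : Option N) (γ : List (CProd N A)) : Prop :=
  match y with
  | some Y => ∃ w : List A, DFCtrlFrom H (k : ℕ∞) [Sum.inl Y] γ (tw w)
  | none => γ = []

/-- the grammar `G_k` with productions `X_i → X_{i-1} X_{i-1}` (1 ≤ i ≤ k) and `X_0 → a` -/
def Gk (k : ℕ) : CFG ℕ Unit :=
  ⟨{p | (∃ i, 1 ≤ i ∧ i ≤ k ∧ p = (i, [Sum.inl (i - 1), Sum.inl (i - 1)])) ∨
        p = (0, [Sum.inr ()])}⟩

end Paper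

/-!
Weigh `X_i` as `2 ^ i` and the letter as `1`: every production of `G_k` preserves the weight of
a word, so `X_k` derives only `a^{2^k}`.

Annotate every nonterminal occurrence with the step that created it. In a depth-first step
sequence of `G_k` from a single nonterminal, occurrences created at the same step are equal,
because every right-hand side is `X_i X_i` or `a`, and each step rewrites an occurrence of maximal
annotation. Every nonterminal has only one production, so the multiset of annotated occurrences
determines the next production, and hence the control word. That control word is `Gk.dfWord k`:
apply `X_{i+1} → X_i X_i`, then derive the two copies of `X_i` one after the other. Starting from a
word with `n` nonterminals, the number of nonterminals along `Gk.dfWord i` reaches at most `n + i`,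
and it does reach `n + i`. So the index of the derivation from `X_k` is exactly `k + 1`.
-/

namespace Paper

theorem exists_eq_append_cons_of_getElem? {α : Type*} {u : List α} {j : ℕ} {e : α}
    (h : u[j]? = some e) : ∃ l₁ l₂, u = l₁ ++ e :: l₂ ∧ l₁.length = j := by
  obtain ⟨hj, rfl⟩ := List.getElem?_eq_some_iff.1 h
  exact ⟨u.take j, u.drop (j + 1), by simp, by simp; omega⟩

theorem getElem?_append_cons_length {α : Type*} (u v : List α) (e : α) :
    (u ++ e :: v)[u.length]? = some e := by
  simp

section StepSequences

variable {N T : Type} {G : CFG N T} {c c' : ℕ∞} {m : ℕ} {u v w : AWord N T}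
  {l l₁ l₂ : List (CProd N T × ℕ)}

theorem applyProd_append_cons (p : CProd N T) (l₁ l₂ : Word N T) (e : N ⊕ T) :
    applyProd p l₁.length (l₁ ++ e :: l₂) = l₁ ++ p.2 ++ l₂ := by
  simp [applyProd]

theorem applyProdA_append_cons (p : CProd N T) (m : ℕ) (l₁ l₂ : AWord N T)
    (e : (N ⊕ T) × ℕ) :
    applyProdA p l₁.length m (l₁ ++ e :: l₂) = l₁ ++ p.2.map (·, m) ++ l₂ := by
  simp [applyProdA]

theorem strip_append (u v : AWord N T) : strip (u ++ v) = strip u ++ strip v :=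
  List.map_append ..

theorem strip_applyProdA (p : CProd N T) (j m : ℕ) (u : AWord N T) :
    strip (applyProdA p j m u) = applyProd p j (strip u) := by
  simp [strip, applyProdA, applyProd, List.map_take, List.map_drop, Function.comp_def]

theorem ntCount_strip (u : AWord N T) : ntCount (strip u) = ntCountA u := by
  simp [ntCount, ntCountA, strip, List.filter_map, Function.comp_def]

theorem ntCountA_applyProdA {p : CProd N T} {j : ℕ} {x : N} {o : ℕ}
    (h : u[j]? = some (Sum.inl x, o)) :
    ntCountA (applyProdA p j m u) + 1 = ntCountA u + ntCount p.2 := by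
  obtain ⟨l₁, l₂, rfl, rfl⟩ := exists_eq_append_cons_of_getElem? h
  simp [applyProdA_append_cons, ntCountA, ntCount, List.filter_map, List.filter_cons,
    Function.comp_def]
  omega

theorem inl_notMem_of_strip_eq_tw {w : List T} (h : strip u = tw w) (x : N) (o : ℕ) :
    (Sum.inl x, o) ∉ u := fun hx => by
  have : Sum.inl x ∈ strip u := List.mem_map_of_mem (f := Prod.fst) hx
  simp [h, tw] at this

theorem dfOK_append_cons {y : N ⊕ T} {o : ℕ}
    (hb : ∀ x o', (Sum.inl x, o') ∈ u ++ v → o' ≤ o) : dfOK (u ++ (y, o) :: v) u.length := by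
  intro i x o' hi s oj hj
  obtain rfl : oj = o := by simp_all
  have := List.mem_of_getElem? hi
  simp only [List.mem_append, List.mem_cons, Prod.mk.injEq] at this hb
  rcases this with h | ⟨-, rfl⟩ | h
  exacts [hb _ _ (.inl h), le_rfl, hb _ _ (.inr h)]

namespace DFSeq

theorem ntCountA_le (h : DFSeq G c m u l v) : (ntCountA u : ℕ∞) ≤ c := by
  cases h with
  | refl _ _ hu => exact hu
  | step hu => exact hu

theorem mono (h : DFSeq G c m u l v) (hc : c ≤ c') : DFSeq G c' m u l v := by
  induction h with
  | refl m u hu => exact .refl m u (hu.trans hc)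
  | step hu hp hg hdf _ ih => exact .step (hu.trans hc) hp hg hdf ih

theorem append (h₁ : DFSeq G c m u l₁ w) (h₂ : DFSeq G c (m + l₁.length) w l₂ v) :
    DFSeq G c m u (l₁ ++ l₂) v := by
  induction h₁ with
  | refl => simpa using h₂
  | step hu hp hg hdf _ ih =>
    exact .step hu hp hg hdf (ih (by simpa [Nat.add_right_comm, Nat.add_assoc] using h₂))

theorem exists_of_append (h : DFSeq G c m u (l₁ ++ l₂) v) :
    ∃ w, DFSeq G c m u l₁ w ∧ DFSeq G c (m + l₁.length) w l₂ v := by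
  induction l₁ generalizing m u with
  | nil => exact ⟨u, .refl m u h.ntCountA_le, by simpa using h⟩
  | cons a l₁ ih =>
    cases h with
    | step hu hp hg hdf ht =>
      obtain ⟨w, h₁, h₂⟩ := ih ht
      exact ⟨w, .step hu hp hg hdf h₁, by simpa [Nat.add_right_comm, Nat.add_assoc] using h₂⟩

theorem toKSeq (h : DFSeq G c m u l v) : KSeq G c (strip u) l (strip v) := by
  induction h with
  | refl _ _ hu => exact .refl _ (by rwa [ntCount_strip])
  | step hu hp hg _ _ ih =>
    refine .step (by rwa [ntCount_strip]) hp ?_ (by rwa [strip_applyProdA] at ih)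
    simp [strip, hg]

theorem dfCtrlFrom {u : Word N T} (h : DFSeq G c 0 (annot u) l v) :
    DFCtrlFrom G c u (l.map Prod.fst) (strip v) :=
  ⟨l.map Prod.snd, v, by simp, by rwa [← List.zip_of_prod rfl rfl], rfl⟩

end DFSeq

theorem DFCtrlFrom.ctrlSeq {u v : Word N T} {γ : List (CProd N T)}
    (h : DFCtrlFrom G c u γ v) : CtrlSeq G c u γ v := by
  obtain ⟨js, va, hlen, h, rfl⟩ := h
  exact ⟨js, hlen, by simpa [strip, annot, Function.comp_def] using h.toKSeq⟩

theorem KSeq.sum_map_eq {u v : Word N T} (f : N ⊕ T → ℕ)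
    (hf : ∀ p ∈ G.prods, (p.2.map f).sum = f (Sum.inl p.1)) (h : KSeq G c u l v) :
    (u.map f).sum = (v.map f).sum := by
  induction h with
  | refl => rfl
  | step _ hp hg _ ih =>
    obtain ⟨l₁, l₂, rfl, rfl⟩ := exists_eq_append_cons_of_getElem? hg
    rw [← ih, applyProd_append_cons]
    simp [hf _ hp]

end StepSequences

section Uniqueness

variable {N T : Type} {G : CFG N T} {m : ℕ} {u v : AWord N T}

def ntEntries (u : AWord N T) : Multiset (N × ℕ) :=
  (u.filterMap fun s => s.1.getLeft?.map (·, s.2) : List (N × ℕ))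

theorem mem_ntEntries {a : N × ℕ} : a ∈ ntEntries u ↔ (Sum.inl a.1, a.2) ∈ u := by
  obtain ⟨x, o⟩ := a
  simp only [ntEntries, Multiset.mem_coe, List.mem_filterMap]
  constructor
  · rintro ⟨⟨_ | _, o'⟩, hs, he⟩ <;> simp_all
  · exact fun hx => ⟨_, hx, rfl⟩

theorem ntEntries_eq_zero_of_strip_eq_tw {w : List T} (h : strip u = tw w) : ntEntries u = 0 :=
  Multiset.eq_zero_of_forall_notMem fun a ha =>
    inl_notMem_of_strip_eq_tw h a.1 a.2 (mem_ntEntries.1 ha)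

theorem ntEntries_applyProdA {p : CProd N T} {j : ℕ} {x : N} {o : ℕ}
    (h : u[j]? = some (Sum.inl x, o)) :
    ntEntries (applyProdA p j m u) + {(x, o)} =
      ntEntries u + (((ntProj p.2).map (·, m) : List (N × ℕ)) : Multiset (N × ℕ)) := by
  obtain ⟨l₁, l₂, rfl, rfl⟩ := exists_eq_append_cons_of_getElem? h
  simp only [ntEntries, ntProj, applyProdA_append_cons, List.filterMap_append,
    List.filterMap_cons, List.filterMap_map, List.map_filterMap, ← Multiset.coe_add,
    Function.comp_def, Sum.getLeft?_inl, Option.map_some, ← Multiset.cons_coe,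
    ← Multiset.singleton_add]
  abel

theorem le_of_dfOK {j : ℕ} {s : N ⊕ T} {o : ℕ} (hdf : dfOK u j) (h : u[j]? = some (s, o)) :
    ∀ a ∈ ntEntries u, a.2 ≤ o := fun a ha => by
  obtain ⟨i, hi, hia⟩ := List.getElem_of_mem (mem_ntEntries.1 ha)
  exact hdf i a.1 a.2 (by simp [hi, hia]) s o h

def IndexCoherent (m : ℕ) (E : Multiset (N × ℕ)) : Prop :=
  (∀ a ∈ E, a.2 ≤ m) ∧ ∀ a ∈ E, ∀ b ∈ E, a.2 = b.2 → a.1 = b.1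

theorem IndexCoherent.mono {E F : Multiset (N × ℕ)} (h : IndexCoherent m F) (hle : E ≤ F) :
    IndexCoherent m E :=
  ⟨fun a ha => h.1 a (Multiset.mem_of_le hle ha),
    fun a ha b hb => h.2 a (Multiset.mem_of_le hle ha) b (Multiset.mem_of_le hle hb)⟩

theorem IndexCoherent.add_map {E : Multiset (N × ℕ)} {xs : List N} (h : IndexCoherent m E)
    (hxs : ∀ x ∈ xs, ∀ y ∈ xs, x = y) :
    IndexCoherent (m + 1) (E + ((xs.map (·, m + 1) : List (N × ℕ)) : Multiset (N × ℕ))) := by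
  have hE := h.1
  refine ⟨fun a ha => ?_, fun a ha b hb hab => ?_⟩
  · simp only [Multiset.mem_add, Multiset.mem_coe, List.mem_map] at ha
    rcases ha with ha | ⟨x, -, rfl⟩
    exacts [(hE a ha).trans m.le_succ, le_rfl]
  · simp only [Multiset.mem_add, Multiset.mem_coe, List.mem_map] at ha hb
    rcases ha with ha | ⟨x, hx, rfl⟩ <;> rcases hb with hb | ⟨y, hy, rfl⟩
    · exact h.2 a ha b hb hab
    · exact absurd (hE a ha) (by simp at hab; omega)
    · exact absurd (hE b hb) (by simp at hab; omega)
    · exact hxs x hx y hy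

theorem IndexCoherent.applyProdA {p : CProd N T} {j : ℕ} {x : N} {o : ℕ}
    (h : IndexCoherent m (ntEntries u)) (hp : ∀ x ∈ ntProj p.2, ∀ y ∈ ntProj p.2, x = y)
    (hg : u[j]? = some (Sum.inl x, o)) :
    IndexCoherent (m + 1) (ntEntries (applyProdA p j (m + 1) u)) :=
  (h.add_map hp).mono ((ntEntries_applyProdA hg).symm ▸ Multiset.le_add_right _ _)

theorem DFSeq.map_fst_eq_of_ntEntries_eq {c₁ c₂ : ℕ∞} {u₁ u₂ v₁ v₂ : AWord N T}
    {l₁ l₂ : List (CProd N T × ℕ)}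
    (hdet : ∀ p ∈ G.prods, ∀ q ∈ G.prods, p.1 = q.1 → p = q)
    (hrhs : ∀ p ∈ G.prods, ∀ x ∈ ntProj p.2, ∀ y ∈ ntProj p.2, x = y)
    (h₁ : DFSeq G c₁ m u₁ l₁ v₁) (h₂ : DFSeq G c₂ m u₂ l₂ v₂)
    (hu : ntEntries u₁ = ntEntries u₂) (hcoh : IndexCoherent m (ntEntries u₁))
    (hv₁ : ntEntries v₁ = 0) (hv₂ : ntEntries v₂ = 0) : l₁.map Prod.fst = l₂.map Prod.fst := by
  induction h₁ generalizing u₂ l₂ with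
  | refl =>
    cases h₂ with
    | refl => rfl
    | step _ _ hg =>
      have := mem_ntEntries (a := (_, _)) |>.2 (List.mem_of_getElem? hg)
      simp [← hu, hv₁] at this
  | @step m u₁ v₁ p j o₁ l₁ _ hp hg₁ hdf₁ _ ih =>
    have hmem₁ : (p.1, o₁) ∈ ntEntries u₁ := mem_ntEntries.2 (List.mem_of_getElem? hg₁)
    cases h₂ with
    | refl => simp [hu, hv₂] at hmem₁
    | @step _ _ _ q j₂ o₂ l₂ _ hq hg₂ hdf₂ h₂ =>
      have hmem₂ : (q.1, o₂) ∈ ntEntries u₁ := hu ▸ mem_ntEntries.2 (List.mem_of_getElem? hg₂)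
      have ho : o₁ = o₂ :=
        le_antisymm (le_of_dfOK hdf₂ hg₂ _ (hu ▸ hmem₁)) (le_of_dfOK hdf₁ hg₁ _ hmem₂)
      obtain rfl : p = q := hdet p hp q hq (hcoh.2 _ hmem₁ _ hmem₂ ho)
      subst ho
      have hu' : ntEntries (applyProdA p j (m + 1) u₁) = ntEntries (applyProdA p j₂ (m + 1) u₂) :=
        add_right_cancel ((ntEntries_applyProdA hg₁).trans
          (hu ▸ (ntEntries_applyProdA hg₂).symm))
      simpa using ih h₂ hu' (hcoh.applyProdA (hrhs p hp) hg₁) hv₁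

theorem DFCtrlFrom.unique {c₁ c₂ : ℕ∞} {X : N} {γ₁ γ₂ : List (CProd N T)} {w₁ w₂ : List T}
    (hdet : ∀ p ∈ G.prods, ∀ q ∈ G.prods, p.1 = q.1 → p = q)
    (hrhs : ∀ p ∈ G.prods, ∀ x ∈ ntProj p.2, ∀ y ∈ ntProj p.2, x = y)
    (h₁ : DFCtrlFrom G c₁ [Sum.inl X] γ₁ (tw w₁)) (h₂ : DFCtrlFrom G c₂ [Sum.inl X] γ₂ (tw w₂)) :
    γ₁ = γ₂ := by
  obtain ⟨js₁, v₁, hlen₁, h₁, hv₁⟩ := h₁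
  obtain ⟨js₂, v₂, hlen₂, h₂, hv₂⟩ := h₂
  have hcoh : IndexCoherent 0 (ntEntries (annot [Sum.inl X] : AWord N T)) := by
    simp [IndexCoherent, ntEntries, annot, Sum.getLeft?]
  simpa [List.map_fst_zip, hlen₁, hlen₂] using
    h₁.map_fst_eq_of_ntEntries_eq hdet hrhs h₂ rfl hcoh
      (ntEntries_eq_zero_of_strip_eq_tw hv₁) (ntEntries_eq_zero_of_strip_eq_tw hv₂)

end Uniqueness

namespace Gk

def split (i : ℕ) : CProd ℕ Unit := (i + 1, [Sum.inl i, Sum.inl i])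

def leaf : CProd ℕ Unit := (0, [Sum.inr ()])

theorem split_mem {k i : ℕ} (h : i + 1 ≤ k) : split i ∈ (Gk k).prods :=
  Or.inl ⟨i + 1, by omega, h, by simp [split]⟩

theorem leaf_mem {k : ℕ} : leaf ∈ (Gk k).prods := Or.inr rfl

theorem eq_of_fst_eq {k : ℕ} : ∀ p ∈ (Gk k).prods, ∀ q ∈ (Gk k).prods, p.1 = q.1 → p = q := by
  rintro _ (⟨i, hi, -, rfl⟩ | rfl) _ (⟨i', hi', -, rfl⟩ | rfl) h <;> simp_all; omega

theorem ntProj_rhs {k : ℕ} :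
    ∀ p ∈ (Gk k).prods, ∀ x ∈ ntProj p.2, ∀ y ∈ ntProj p.2, x = y := by
  rintro _ (⟨i, -, -, rfl⟩ | rfl) <;> simp [ntProj]

def weight : ℕ ⊕ Unit → ℕ := Sum.elim (2 ^ ·) fun _ => 1

theorem sum_map_weight_rhs {k : ℕ} :
    ∀ p ∈ (Gk k).prods, (p.2.map weight).sum = weight (Sum.inl p.1) := by
  rintro _ (⟨i, hi, -, rfl⟩ | rfl)
  · simp only [weight, List.map_cons, List.map_nil, List.sum_cons, List.sum_nil, Sum.elim_inl,
      add_zero]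
    rw [← two_mul, ← pow_succ', Nat.sub_add_cancel hi]
  · rfl

def dfWord : ℕ → List (CProd ℕ Unit)
  | 0 => [leaf]
  | i + 1 => split i :: (dfWord i ++ dfWord i)

theorem two_pow_le_length_dfWord (i : ℕ) : 2 ^ i ≤ (dfWord i).length := by
  induction i with
  | zero => simp [dfWord]
  | succ i ih => simp only [dfWord, List.length_cons, List.length_append, pow_succ]; omega

theorem exists_DFSeq_dfWord {k i m o : ℕ} {u v : AWord ℕ Unit} (hik : i ≤ k) (hom : o ≤ m)
    (hb : ∀ x o', (Sum.inl x, o') ∈ u ++ v → o' ≤ o) :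
    ∃ l mid, l.map Prod.fst = dfWord i ∧ strip mid = tw (List.replicate (2 ^ i) ()) ∧
      DFSeq (Gk k) ⊤ m (u ++ (Sum.inl i, o) :: v) l (u ++ mid ++ v) := by
  induction i generalizing m o u v with
  | zero =>
    refine ⟨[(leaf, u.length)], [(Sum.inr (), m + 1)], rfl, rfl,
      .step le_top leaf_mem (getElem?_append_cons_length u v _) (dfOK_append_cons hb) ?_⟩
    rw [applyProdA_append_cons]
    exact .refl _ _ le_top
  | succ i ih =>
    obtain ⟨l₁, mid₁, hl₁, hs₁, h₁⟩ := ih (m := m + 1) (o := m + 1) (u := u)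
      (v := (Sum.inl i, m + 1) :: v) (by omega) le_rfl (by
        simp only [List.mem_append, List.mem_cons, Prod.mk.injEq] at hb ⊢
        rintro x o' (h | ⟨-, rfl⟩ | h)
        exacts [(hb x o' (.inl h)).trans (by omega), le_rfl, (hb x o' (.inr h)).trans (by omega)])
    obtain ⟨l₂, mid₂, hl₂, hs₂, h₂⟩ := ih (m := m + 1 + l₁.length) (o := m + 1)
      (u := u ++ mid₁) (v := v) (by omega) (by omega) (by
        simp only [List.mem_append] at hb ⊢
        rintro x o' ((h | h) | h)
        exacts [(hb x o' (.inl h)).trans (by omega),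
          absurd h (inl_notMem_of_strip_eq_tw hs₁ x o'), (hb x o' (.inr h)).trans (by omega)])
    refine ⟨(split i, u.length) :: (l₁ ++ l₂), mid₁ ++ mid₂, by simp [dfWord, hl₁, hl₂], ?_,
      .step le_top (split_mem hik) (getElem?_append_cons_length u v _) (dfOK_append_cons hb) ?_⟩
    · simp only [strip_append, hs₁, hs₂, tw, ← List.map_append, ← List.replicate_add, pow_succ,
        mul_two]
    · rw [applyProdA_append_cons]
      simpa [split] using h₁.append h₂

theorem dfCtrlFrom_dfWord (k : ℕ) :
    DFCtrlFrom (Gk k) ⊤ [Sum.inl k] (dfWord k) (tw (List.replicate (2 ^ k) ())) := by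
  obtain ⟨l, mid, hl, hs, h⟩ := exists_DFSeq_dfWord (k := k) (m := 0) (u := []) (v := [])
    le_rfl le_rfl (by simp)
  simpa [hl, hs] using DFSeq.dfCtrlFrom (u := [Sum.inl k]) h

theorem eq_dfWord_of_dfCtrlFrom {k : ℕ} {c : ℕ∞} {γ : List (CProd ℕ Unit)} {w : List Unit}
    (h : DFCtrlFrom (Gk k) c [Sum.inl k] γ (tw w)) : γ = dfWord k :=
  h.unique eq_of_fst_eq ntProj_rhs (dfCtrlFrom_dfWord k)

theorem lang_eq (k : ℕ) : Lang (Gk k) k = {List.replicate (2 ^ k) ()} := by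
  ext w
  constructor
  · rintro ⟨u, v, γ, rfl, js, -, h⟩
    have := h.sum_map_eq weight sum_map_weight_rhs
    simp [weight, sent, tw] at this
    exact List.eq_replicate_iff.2 ⟨by simp; omega, fun _ _ => rfl⟩
  · rintro rfl
    exact ⟨List.replicate (2 ^ k) (), [], dfWord k, by simp,
      by simpa [sent, tw] using (dfCtrlFrom_dfWord k).ctrlSeq⟩

theorem DFSeq_dfWord_iff {k i m : ℕ} {c : ℕ∞} {u v : AWord ℕ Unit}
    {l : List (CProd ℕ Unit × ℕ)} (hl : l.map Prod.fst = dfWord i)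
    (h : DFSeq (Gk k) ⊤ m u l v) :
    (DFSeq (Gk k) c m u l v ↔ ((ntCountA u + i : ℕ) : ℕ∞) ≤ c) ∧
      ntCountA v + 1 = ntCountA u := by
  induction i generalizing m u v l with
  | zero =>
    obtain ⟨⟨p, j⟩, l', rfl, hp, hl'⟩ := List.map_eq_cons_iff.1 hl
    obtain rfl : p = leaf := hp
    obtain rfl : l' = [] := List.map_eq_nil_iff.1 hl'
    cases h with
    | step _ hp hg hdf ht =>
      cases ht
      have hcount := ntCountA_applyProdA (p := leaf) (m := m + 1) hg
      rw [show ntCount leaf.2 = 0 from rfl] at hcount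
      refine ⟨⟨fun h' => h'.ntCountA_le, fun hc => ?_⟩, hcount⟩
      exact .step hc hp hg hdf (.refl _ _ ((Nat.cast_le.2 (by omega)).trans hc))
  | succ i ih =>
    obtain ⟨⟨p, j⟩, l', rfl, hp, hl'⟩ := List.map_eq_cons_iff.1 hl
    obtain rfl : p = split i := hp
    obtain ⟨l₁, l₂, rfl, hl₁, hl₂⟩ := List.map_eq_append_iff.1 hl'
    cases h with
    | step _ hp hg hdf ht =>
      obtain ⟨w, t₁, t₂⟩ := ht.exists_of_append
      obtain ⟨iff₁, hw⟩ := ih hl₁ t₁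
      obtain ⟨iff₂, hv⟩ := ih hl₂ t₂
      have hcount := ntCountA_applyProdA (p := split i) (m := m + 1) hg
      rw [show ntCount (split i).2 = 2 from rfl] at hcount
      refine ⟨⟨fun h' => ?_, fun hc => ?_⟩, by omega⟩
      · cases h' with
        | step _ _ _ _ ht' =>
          obtain ⟨_, t₁', -⟩ := ht'.exists_of_append
          have := (ih hl₁ (t₁'.mono le_top)).1.1 t₁'
          rwa [show ntCountA u + (i + 1) = ntCountA (applyProdA (split i) j (m + 1) u) + i
            by omega]
      · have hle (n : ℕ) (hn : n ≤ ntCountA u + (i + 1)) : (n : ℕ∞) ≤ c :=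
          (Nat.cast_le.2 hn).trans hc
        exact .step (hle _ (by omega)) hp hg hdf
          ((iff₁.2 (hle _ (by omega))).append (iff₂.2 (hle _ (by omega))))

end Gk

theorem Gk_properties_general (k : ℕ) :
    Lang (Gk k) k = {List.replicate (2 ^ k) ()} ∧
    (∃ γ : List (CProd ℕ Unit),
      DFCtrlFrom (Gk k) ⊤ [Sum.inl k] γ (tw (List.replicate (2 ^ k) ())) ∧
      2 ^ k ≤ γ.length ∧
      ∀ γ' : List (CProd ℕ Unit),
        DFCtrlFrom (Gk k) ⊤ [Sum.inl k] γ' (tw (List.replicate (2 ^ k) ())) → γ' = γ) ∧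
    (∀ (γ : List (CProd ℕ Unit)) (js : List ℕ) (va : AWord ℕ Unit),
      js.length = γ.length →
      DFSeq (Gk k) ⊤ 0 (annot [Sum.inl k]) (γ.zip js) va →
      strip va = tw (List.replicate (2 ^ k) ()) →
      DFSeq (Gk k) ((k : ℕ∞) + 1) 0 (annot [Sum.inl k]) (γ.zip js) va ∧
      ¬ DFSeq (Gk k) (k : ℕ∞) 0 (annot [Sum.inl k]) (γ.zip js) va) := by
  refine ⟨Gk.lang_eq k, ⟨_, Gk.dfCtrlFrom_dfWord k, Gk.two_pow_le_length_dfWord k,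
    fun _ h => Gk.eq_dfWord_of_dfCtrlFrom h⟩, fun γ js va hlen h hstrip => ?_⟩
  have hl : (γ.zip js).map Prod.fst = Gk.dfWord k := by
    rw [List.map_fst_zip hlen.ge, Gk.eq_dfWord_of_dfCtrlFrom ⟨js, va, hlen, h, hstrip⟩]
  have hindex (c : ℕ∞) : DFSeq (Gk k) c 0 (annot [Sum.inl k]) (γ.zip js) va ↔ 1 + k ≤ c := by
    simpa [show ntCountA (annot [Sum.inl k] : AWord ℕ Unit) = 1 from rfl] using
      (Gk.DFSeq_dfWord_iff hl h).1
  refine ⟨(hindex _).2 (by rw [add_comm]), fun h' => ?_⟩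
  exact absurd ((hindex _).1 h') (by norm_cast; omega)

/-- facts about the grammar `G_k`: (1) `L_{X_k}(G_k) = {a^{2^k}}`;
(2) there is exactly one control word of a depth-first derivation of `a^{2^k}` from
`X_k`, of length at least `2^k`; (3) every depth-first derivation of `a^{2^k}` from
`X_k` has index exactly `k+1`. -/
theorem Gk_properties (k : ℕ) (hk : 0 < k) :
    Lang (Gk k) k = {List.replicate (2 ^ k) ()} ∧
    (∃ γ : List (CProd ℕ Unit),
      DFCtrlFrom (Gk k) ⊤ [Sum.inl k] γ (tw (List.replicate (2 ^ k) ())) ∧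
      2 ^ k ≤ γ.length ∧
      ∀ γ' : List (CProd ℕ Unit),
        DFCtrlFrom (Gk k) ⊤ [Sum.inl k] γ' (tw (List.replicate (2 ^ k) ())) → γ' = γ) ∧
    (∀ (γ : List (CProd ℕ Unit)) (js : List ℕ) (va : AWord ℕ Unit),
      js.length = γ.length →
      DFSeq (Gk k) ⊤ 0 (annot [Sum.inl k]) (γ.zip js) va →
      strip va = tw (List.replicate (2 ^ k) ()) →
      DFSeq (Gk k) ((k : ℕ∞) + 1) 0 (annot [Sum.inl k]) (γ.zip js) va ∧
      ¬ DFSeq (Gk k) (k : ℕ∞) 0 (annot [Sum.inl k]) (γ.zip js) va) :=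
  Gk_properties_general k

end Paper
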